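/- Let ≺ be a computably enumerable transitive relation on ℕ and let U ⊆ ℕ be a computably enumerable set. Let A = {I ∈ I(≺) | ∀ x ∈ U, x ∉ I}. Then there exists a computably enumerable transitive relation ⊏ on ℕ such that I(⊏) is homeomorphic to the topological space whose underlying set is I(≺) and whose topology is generated by the open sets of I(≺) together with the additional set A. -/

import Mathlib

/-!
Enumerate `≺` and `U` in stages; at stage `s` only finitely many pairs of `≺` are known, so
their transitive closure `≺ₛ` is decidable. The new relation lives on codes of triples
`(f, a, t)`: the point `a` at stage `t`, marked if `f = true`. A code with point `a` and stage
`s` lies above one with point `b` and an earlier stage when `b ≺ₛ a`; it is marked exactly when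
no element of `U` enumerated by stage `s` lies `≼ₛ a`, and nothing unmarked lies above a marked
code.

Every ideal `J` of this relation projects to an ideal `I` of `≺`, contains a marked code iff `I`
avoids `U`, and is recovered from `I` as the set of all codes with point in `I`, the marked
ones only if `I` avoids `U`. Under this bijection the basic open set of a point `a` pulls back
to the union of the basic sets of the codes with point `a`, the adjoined set `A` to the union
of the basic sets of the marked codes, and the basic set of a code with point `a` corresponds to
`[a]`, or to `[a] ∩ A` if the code is marked.
-/

/-- An ideal of a (transitive) relation `r` on `S`: a nonempty, downward closed,
directed subset of `S`. -/
def IsIdeal {S : Type*} (r : S → S → Prop) (I : Set S) : Prop :=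
  I.Nonempty ∧ (∀ a ∈ I, ∀ b, r b a → b ∈ I) ∧
    ∀ a ∈ I, ∀ b ∈ I, ∃ c ∈ I, r a c ∧ r b c

/-- The space of ideals of a relation `r`. -/
def IdealSpace {S : Type*} (r : S → S → Prop) : Type _ :=
  {I : Set S // IsIdeal r I}

/-- The topology on the space of ideals, generated by the basic sets
`[a] = {I | a ∈ I}` for `a : S`. -/
instance {S : Type*} (r : S → S → Prop) : TopologicalSpace (IdealSpace r) :=
  TopologicalSpace.generateFrom {U | ∃ a : S, U = {I : IdealSpace r | a ∈ I.1}}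

/-- A predicate is recursively enumerable (computably enumerable) if the partial
function `fun a => Part.assert (p a) fun _ => Part.some ()` is partial recursive.
(This is Mathlib's `REPred`, absent from this Mathlib version.) -/
def REPred' {α : Type*} [Primcodable α] (p : α → Prop) : Prop :=
  Partrec fun a => Part.assert (p a) fun _ => Part.some ()

open Nat.Partrec Relation Filter Topology

theorem REPred'.exists_primrec_stages {α : Type*} [Primcodable α] {p : α → Prop}
    (hp : REPred' p) :
    ∃ B : ℕ → α → Bool, Primrec₂ B ∧ (∀ {s s' a}, s ≤ s' → B s a → B s' a) ∧
      ∀ a, p a ↔ ∃ s, B s a := by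
  obtain ⟨c, hc⟩ := Code.exists_code.1 hp
  have hdom : ∀ a, p a ↔ (c.eval (Encodable.encode a)).Dom := fun a => by
    simp [hc, Part.assert]
  refine ⟨fun s a => (c.evaln s (Encodable.encode a)).isSome, ?_, ?_, fun a => ?_⟩
  · exact Primrec.option_isSome.comp (Code.primrec_evaln.comp
      ((Primrec.fst.pair (Primrec.const c)).pair (Primrec.encode.comp Primrec.snd)))
  · intro s s' a hs h
    obtain ⟨x, hx⟩ := Option.isSome_iff_exists.1 h
    exact Option.isSome_iff_exists.2 ⟨x, Code.evaln_mono hs hx⟩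
  · simp only [hdom, Part.dom_iff_mem, Code.evaln_complete, Option.isSome_iff_exists]
    exact ⟨fun ⟨x, s, hs⟩ => ⟨s, x, hs⟩, fun ⟨s, x, hs⟩ => ⟨x, s, hs⟩⟩

section ReachList

variable (r : ℕ → ℕ → Prop) [DecidableRel r] (n b : ℕ)

def reachList : ℕ → List ℕ
  | 0 => []
  | k + 1 => (List.range n).filter fun y => r b y ∨ ∃ x ∈ reachList k, r x y

variable {r n b}

theorem mem_reachList_succ {k y : ℕ} :
    y ∈ reachList r n b (k + 1) ↔ y < n ∧ (r b y ∨ ∃ x ∈ reachList r n b k, r x y) := by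
  simp [reachList]

theorem reachList_sublist_succ (k : ℕ) :
    (reachList r n b k).Sublist (reachList r n b (k + 1)) := by
  induction k with
  | zero => exact List.nil_sublist _
  | succ k ih =>
    refine List.monotone_filter_right _ fun y => ?_
    simp only [decide_eq_true_eq]
    exact Or.imp_right fun ⟨x, hx, hxy⟩ => ⟨x, ih.subset hx, hxy⟩

theorem reachList_sublist {k l : ℕ} (hkl : k ≤ l) :
    (reachList r n b k).Sublist (reachList r n b l) := by
  induction l, hkl using Nat.le_induction with
  | base => exact List.Sublist.refl _
  | succ l _ ih => exact ih.trans (reachList_sublist_succ l)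

/-- The lists are increasing sublists of `List.range n`, so they stabilise within `n` rounds. -/
theorem reachList_eq_of_le {k : ℕ} (hk : n ≤ k) : reachList r n b k = reachList r n b n := by
  have hlen : ∀ k, (reachList r n b k).length ≤ n := fun
    | 0 => Nat.zero_le _
    | k + 1 => (List.filter_sublist.length_le).trans_eq (List.length_range)
  have hstab := Nat.stabilises_of_monotone (f := fun k => (reachList r n b k).length)
    (monotone_nat_of_le_succ fun k => (reachList_sublist_succ k).length_le) hlen
    (fun m hm => by
      have h : reachList r n b m = reachList r n b (m + 1) :=
        (reachList_sublist_succ m).eq_of_length hm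
      exact congrArg (fun L => ((List.range n).filter fun y => r b y ∨ ∃ x ∈ L, r x y).length)
        h)
    hk
  exact ((reachList_sublist hk).eq_of_length hstab.symm).symm

theorem transGen_of_mem_reachList {k a : ℕ} (h : a ∈ reachList r n b k) : TransGen r b a := by
  induction k generalizing a with
  | zero => simp [reachList] at h
  | succ k ih =>
    obtain ⟨-, h | ⟨x, hx, hxa⟩⟩ := mem_reachList_succ.1 h
    · exact .single h
    · exact .tail (ih hx) hxa

theorem transGen_iff_mem_reachList (hr : ∀ x y, r x y → y < n) {a : ℕ} :
    TransGen r b a ↔ a ∈ reachList r n b n := by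
  refine ⟨fun h => ?_, transGen_of_mem_reachList⟩
  suffices ∃ k, a ∈ reachList r n b k by
    obtain ⟨k, hk⟩ := this
    rcases le_total k n with hkn | hnk
    · exact (reachList_sublist hkn).subset hk
    · rwa [← reachList_eq_of_le hnk]
  induction h with
  | single h => exact ⟨1, mem_reachList_succ.2 ⟨hr _ _ h, Or.inl h⟩⟩
  | tail _ h ih =>
    obtain ⟨k, hk⟩ := ih
    exact ⟨k + 1, mem_reachList_succ.2 ⟨hr _ _ h, Or.inr ⟨_, hk, h⟩⟩⟩

end ReachList

open Primrec in
theorem PrimrecPred.transGen {E : ℕ → ℕ → ℕ → Prop}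
    (hE : PrimrecPred fun x : ℕ × ℕ × ℕ => E x.1 x.2.1 x.2.2)
    (hbound : ∀ s x y, E s x y → y < s) :
    PrimrecPred fun x : ℕ × ℕ × ℕ => TransGen (E x.1) x.2.1 x.2.2 := by
  classical
  have hstep : PrimrecRel fun (y : ℕ) (q : (ℕ × ℕ) × ℕ × List ℕ) =>
      E q.1.1 q.1.2 y ∨ ∃ z ∈ q.2.2, E q.1.1 z y := by
    have hlink : PrimrecRel fun (L : List ℕ) (w : ℕ × ℕ) => ∃ z ∈ L, E w.1 z w.2 :=
      PrimrecRel.exists_mem_list <| hE.comp <| (fst.comp snd).pair <| fst.pair (snd.comp snd)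
    exact (hE.comp <| (fst.comp <| fst.comp snd).pair <| (snd.comp <| fst.comp snd).pair fst).or <|
      hlink.comp (snd.comp <| snd.comp snd) <| (fst.comp <| fst.comp snd).pair fst
  have hreach : Primrec fun x : ℕ × ℕ => reachList (E x.1) x.1 x.2 x.1 := by
    refine (nat_rec' fst (const []) <|
      (hstep.listFilter.comp (list_range.comp <| fst.comp fst) .id).to₂).of_eq fun x => ?_
    obtain ⟨s, b⟩ := x
    have key : ∀ k, Nat.rec (motive := fun _ => List ℕ) []
        (fun _ L => (List.range s).filter fun y => E s b y ∨ ∃ z ∈ L, E s z y) k =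
        reachList (E s) s b k := fun k => by
      induction k with
      | zero => rfl
      | succ k ih => rw [reachList, ← ih]
    exact key s
  refine (PrimrecRel.exists_mem_list Primrec.eq).comp
    (hreach.comp <| fst.pair <| fst.comp snd) (snd.comp snd) |>.of_eq fun x => ?_
  simp [transGen_iff_mem_reachList (hbound x.1)]

namespace IsIdeal

variable {S : Type*} {r : S → S → Prop} {I : Set S}

theorem exists_rel_of_mem (hI : IsIdeal r I) {x : S} (hx : x ∈ I) : ∃ y ∈ I, r x y :=
  let ⟨y, hy, hxy, _⟩ := hI.2.2 x hx x hx
  ⟨y, hy, hxy⟩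

theorem exists_rel_lt [IsTrans S r] (hI : IsIdeal r I) {φ : S → ℕ}
    (hφ : ∀ x y, r x y → φ x < φ y) {x : S} (hx : x ∈ I) (N : ℕ) :
    ∃ y ∈ I, r x y ∧ N < φ y := by
  induction N with
  | zero =>
    obtain ⟨y, hy, hxy⟩ := hI.exists_rel_of_mem hx
    exact ⟨y, hy, hxy, (Nat.zero_le _).trans_lt (hφ x y hxy)⟩
  | succ N ih =>
    obtain ⟨y, hy, hxy, hNy⟩ := ih
    obtain ⟨z, hz, hyz⟩ := hI.exists_rel_of_mem hy
    exact ⟨z, hz, _root_.trans hxy hyz, lt_of_le_of_lt hNy (hφ y z hyz)⟩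

end IsIdeal

namespace IdealSpace

variable {S : Type*} (r : S → S → Prop)

theorem isOpen_setOf_mem (a : S) : IsOpen {I : IdealSpace r | a ∈ I.1} :=
  TopologicalSpace.isOpen_generateFrom_of_mem ⟨a, rfl⟩

variable {r}

theorem continuous_iff {X : Type*} [TopologicalSpace X] {f : X → IdealSpace r} :
    Continuous f ↔ ∀ a, IsOpen {x | a ∈ (f x).1} := by
  refine continuous_generateFrom_iff.trans ⟨fun h a => h _ ⟨a, rfl⟩, ?_⟩
  rintro h _ ⟨a, rfl⟩
  exact h a

end IdealSpace

namespace TopologicalSpace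

variable {X : Type*} [TopologicalSpace X]

abbrev withOpen (A : Set X) : TopologicalSpace X :=
  generateFrom ({s | IsOpen s} ∪ {A})

variable {A : Set X}

theorem isOpen_withOpen_of_isOpen {s : Set X} (hs : IsOpen s) : IsOpen[withOpen A] s :=
  isOpen_generateFrom_of_mem (Or.inl hs)

theorem isOpen_withOpen_self : IsOpen[withOpen A] A :=
  isOpen_generateFrom_of_mem (Or.inr rfl)

theorem continuous_withOpen_iff {Y : Type*} [TopologicalSpace Y] {f : Y → X} :
    Continuous[_, withOpen A] f ↔ Continuous f ∧ IsOpen (f ⁻¹' A) := by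
  simp only [continuous_generateFrom_iff, Set.mem_union, Set.mem_singleton_iff, or_imp,
    forall_and, forall_eq, continuous_def]
  rfl

end TopologicalSpace

namespace AdjoinOpen

structure Stages (prec : ℕ → ℕ → Prop) (U : Set ℕ) (E : ℕ → ℕ → ℕ → Prop)
    (V : ℕ → ℕ → Prop) : Prop where
  edge_mono : ∀ {s s' b a}, s ≤ s' → E s b a → E s' b a
  prec_iff : ∀ b a, prec b a ↔ ∃ s, E s b a
  mem_mono : ∀ {s s' y}, s ≤ s' → V s y → V s' y
  mem_iff : ∀ y, y ∈ U ↔ ∃ s, V s y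

def IsClean (E : ℕ → ℕ → ℕ → Prop) (V : ℕ → ℕ → Prop) (s a : ℕ) : Prop :=
  ∀ y < s, V s y → ¬ReflTransGen (E s) y a

/-- `code f a t` encodes the point `a` at stage `t`, marked if `f = true`. -/
def code (f : Bool) (a t : ℕ) : ℕ := Nat.bit f (Nat.pair a t)

def point (m : ℕ) : ℕ := m.div2.unpair.1

def stage (m : ℕ) : ℕ := m.div2.unpair.2

@[simp] theorem point_code (f : Bool) (a t : ℕ) : point (code f a t) = a := by
  simp [point, code, Nat.div2_bit]

@[simp] theorem stage_code (f : Bool) (a t : ℕ) : stage (code f a t) = t := by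
  simp [stage, code, Nat.div2_bit]

@[simp] theorem bodd_code (f : Bool) (a t : ℕ) : (code f a t).bodd = f := Nat.bodd_bit _ _

structure Rel (E : ℕ → ℕ → ℕ → Prop) (V : ℕ → ℕ → Prop) (m n : ℕ) : Prop where
  transGen : TransGen (E (stage n)) (point m) (point n)
  stage_lt : stage m < stage n
  bodd_iff : n.bodd = true ↔ IsClean E V (stage n) (point n)
  bodd_imp : m.bodd = true → n.bodd = true

def liftSet (U : Set ℕ) (I : Set ℕ) : Set ℕ :=
  {m | point m ∈ I ∧ (m.bodd = true → ∀ x ∈ U, x ∉ I)}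

variable {prec : ℕ → ℕ → Prop} {U : Set ℕ} {E : ℕ → ℕ → ℕ → Prop} {V : ℕ → ℕ → Prop}

namespace Stages

theorem transGen_mono (H : Stages prec U E V) {s s' b a : ℕ} (hs : s ≤ s')
    (h : TransGen (E s) b a) : TransGen (E s') b a :=
  TransGen.mono (fun _ _ => H.edge_mono hs) _ _ h

theorem prec_of_transGen [IsTrans ℕ prec] (H : Stages prec U E V) {s b a : ℕ}
    (h : TransGen (E s) b a) : prec b a :=
  transGen_minimal (fun x y hxy => (H.prec_iff x y).2 ⟨s, hxy⟩) _ _ h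

theorem eventually_transGen (H : Stages prec U E V) {b a : ℕ} (h : prec b a) :
    ∀ᶠ s in atTop, TransGen (E s) b a :=
  let ⟨s, hs⟩ := (H.prec_iff b a).1 h
  eventually_atTop.2 ⟨s, fun _ h' => .single (H.edge_mono h' hs)⟩

theorem eventually_mem (H : Stages prec U E V) {y : ℕ} (h : y ∈ U) : ∀ᶠ s in atTop, V s y :=
  let ⟨s, hs⟩ := (H.mem_iff y).1 h
  eventually_atTop.2 ⟨s, fun _ h' => H.mem_mono h' hs⟩

theorem isClean_of_isIdeal [IsTrans ℕ prec] (H : Stages prec U E V) {I : Set ℕ}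
    (hI : IsIdeal prec I) (hU : ∀ x ∈ U, x ∉ I) {a : ℕ} (ha : a ∈ I) (s : ℕ) :
    IsClean E V s a := by
  intro y _ hy hya
  refine hU y ((H.mem_iff y).2 ⟨s, hy⟩) ?_
  rcases reflTransGen_iff_eq_or_transGen.1 hya with rfl | h
  · exact ha
  · exact hI.2.1 a ha y (H.prec_of_transGen h)

theorem exists_mem_of_not_isClean [IsTrans ℕ prec] (H : Stages prec U E V) {s a : ℕ}
    (h : ¬IsClean E V s a) : ∃ y ∈ U, y = a ∨ prec y a := by
  simp only [IsClean, not_forall, not_not] at h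
  obtain ⟨y, -, hy, hya⟩ := h
  refine ⟨y, (H.mem_iff y).2 ⟨s, hy⟩, ?_⟩
  rcases reflTransGen_iff_eq_or_transGen.1 hya with rfl | h
  exacts [Or.inl rfl, Or.inr (H.prec_of_transGen h)]

theorem eventually_not_isClean (H : Stages prec U E V) {y a : ℕ} (hy : y ∈ U)
    (hya : prec y a) : ∀ᶠ s in atTop, ¬IsClean E V s a := by
  filter_upwards [H.eventually_mem hy, H.eventually_transGen hya, eventually_gt_atTop y]
    with s hVs hE hys
  exact fun hc => hc y hys hVs hE.to_reflTransGen

theorem isTrans_rel (H : Stages prec U E V) : IsTrans ℕ (Rel E V) where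
  trans _ _ _ hxy hyz :=
    ⟨(H.transGen_mono hyz.stage_lt.le hxy.transGen).trans hyz.transGen,
      hxy.stage_lt.trans hyz.stage_lt, hyz.bodd_iff, hyz.bodd_imp ∘ hxy.bodd_imp⟩

end Stages

theorem Rel.of_reflTransGen {x y z : ℕ} (hxz : Rel E V x z)
    (hyx : ReflTransGen (E (stage z)) (point y) (point x)) (hyz : stage y < stage z)
    (hb : y.bodd = true → z.bodd = true) : Rel E V y z :=
  ⟨.trans_right hyx hxz.transGen, hyz, hxz.bodd_iff, hb⟩

section IdealOfRel

variable {J : Set ℕ}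

theorem exists_rel_bodd_iff (H : Stages prec U E V) (hJ : IsIdeal (Rel E V) J) {x : ℕ}
    (hx : x ∈ J) (N : ℕ) :
    ∃ z ∈ J, Rel E V x z ∧ N < stage z ∧ (z.bodd = true ↔ ∃ m ∈ J, m.bodd = true) := by
  have := H.isTrans_rel
  by_cases hmarked : ∃ m ∈ J, m.bodd = true
  · obtain ⟨m, hm, hm_bodd⟩ := hmarked
    obtain ⟨w, hw, hxw, hmw⟩ := hJ.2.2 x hx m hm
    obtain ⟨z, hz, hwz, hNz⟩ := hJ.exists_rel_lt (fun _ _ h => h.stage_lt) hw N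
    exact ⟨z, hz, _root_.trans hxw hwz, hNz,
      iff_of_true (hwz.bodd_imp (hmw.bodd_imp hm_bodd)) ⟨m, hm, hm_bodd⟩⟩
  · obtain ⟨z, hz, hxz, hNz⟩ := hJ.exists_rel_lt (fun _ _ h => h.stage_lt) hx N
    exact ⟨z, hz, hxz, hNz, iff_of_false (fun h => hmarked ⟨z, hz, h⟩) hmarked⟩

theorem mem_iff_of_isIdeal (H : Stages prec U E V) (hJ : IsIdeal (Rel E V) J) {m : ℕ} :
    m ∈ J ↔ point m ∈ point '' J ∧ (m.bodd = true → ∃ m' ∈ J, m'.bodd = true) := by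
  refine ⟨fun hm => ⟨⟨m, hm, rfl⟩, fun h => ⟨m, hm, h⟩⟩, ?_⟩
  rintro ⟨⟨x, hx, hxm⟩, hb⟩
  obtain ⟨z, hz, hxz, hmz, hz_bodd⟩ := exists_rel_bodd_iff H hJ hx (stage m)
  exact hJ.2.1 z hz m (hxz.of_reflTransGen (hxm ▸ .refl) hmz (hz_bodd.2 ∘ hb))

theorem isIdeal_image [IsTrans ℕ prec] (H : Stages prec U E V) (hJ : IsIdeal (Rel E V) J) :
    IsIdeal prec (point '' J) := by
  refine ⟨hJ.1.image _, ?_, ?_⟩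
  · rintro _ ⟨x, hx, rfl⟩ b hb
    obtain ⟨w, hw⟩ := eventually_atTop.1 (H.eventually_transGen hb)
    obtain ⟨z, hz, hxz, hwz, -⟩ := exists_rel_bodd_iff H hJ hx w
    refine ⟨code false b 0, hJ.2.1 z hz _ (hxz.of_reflTransGen ?_ ?_ ?_), point_code _ _ _⟩
    · simpa using (hw _ hwz.le).to_reflTransGen
    · simpa using (Nat.zero_le w).trans_lt hwz
    · simp
  · rintro _ ⟨x, hx, rfl⟩ _ ⟨y, hy, rfl⟩
    obtain ⟨z, hz, hxz, hyz⟩ := hJ.2.2 x hx y hy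
    exact ⟨point z, ⟨z, hz, rfl⟩, H.prec_of_transGen hxz.transGen,
      H.prec_of_transGen hyz.transGen⟩

theorem exists_bodd_iff [IsTrans ℕ prec] (H : Stages prec U E V) (hJ : IsIdeal (Rel E V) J) :
    (∃ m ∈ J, m.bodd = true) ↔ ∀ u ∈ U, u ∉ point '' J := by
  constructor
  · rintro hmarked u hu ⟨x, hx, rfl⟩
    obtain ⟨w, hw⟩ :=
      eventually_atTop.1 ((H.eventually_mem hu).and (eventually_gt_atTop (point x)))
    obtain ⟨z, -, hxz, hwz, hz_bodd⟩ := exists_rel_bodd_iff H hJ hx w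
    have ⟨hV, hlt⟩ := hw _ hwz.le
    exact hxz.bodd_iff.1 (hz_bodd.2 hmarked) _ hlt hV hxz.transGen.to_reflTransGen
  · intro hU
    by_contra hmarked
    obtain ⟨x, hx⟩ := hJ.1
    obtain ⟨z, hz, hxz, -, hz_bodd⟩ := exists_rel_bodd_iff H hJ hx 0
    have hclean : ¬IsClean E V (stage z) (point z) := fun h =>
      hmarked (hz_bodd.1 (hxz.bodd_iff.2 h))
    obtain ⟨y, hyU, hyz⟩ := H.exists_mem_of_not_isClean hclean
    refine hU y hyU ?_
    rcases hyz with rfl | hyz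
    · exact ⟨z, hz, rfl⟩
    · exact (isIdeal_image H hJ).2.1 _ ⟨z, hz, rfl⟩ y hyz

theorem liftSet_image [IsTrans ℕ prec] (H : Stages prec U E V) (hJ : IsIdeal (Rel E V) J) :
    liftSet U (point '' J) = J := by
  ext m
  rw [mem_iff_of_isIdeal H hJ, exists_bodd_iff H hJ]
  rfl

theorem image_liftSet {I : Set ℕ} : point '' liftSet U I = I := by
  refine Set.Subset.antisymm (Set.image_subset_iff.2 fun m hm => hm.1) fun a ha => ?_
  exact ⟨code false a 0, by simpa [liftSet] using ha, point_code _ _ _⟩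

end IdealOfRel

section IdealOfPrec

variable {I : Set ℕ}

/-- If the ideal meets `U`, the upper bound is also taken above a point of `U`. -/
theorem exists_eventually_isClean_iff [IsTrans ℕ prec] (H : Stages prec U E V)
    (hI : IsIdeal prec I) {a b : ℕ} (ha : a ∈ I) (hb : b ∈ I) :
    ∃ c ∈ I, prec a c ∧ prec b c ∧ ∀ᶠ s in atTop, (IsClean E V s c ↔ ∀ x ∈ U, x ∉ I) := by
  obtain ⟨c₁, hc₁, hac₁, hbc₁⟩ := hI.2.2 a ha b hb
  rcases em (∃ x ∈ U, x ∈ I) with ⟨x, hxU, hxI⟩ | hU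
  · obtain ⟨c, hc, hc₁c, hxc⟩ := hI.2.2 c₁ hc₁ x hxI
    exact ⟨c, hc, _root_.trans hac₁ hc₁c, _root_.trans hbc₁ hc₁c,
      (H.eventually_not_isClean hxU hxc).mono fun _ hs => iff_of_false hs fun h => h x hxU hxI⟩
  · have hU : ∀ x ∈ U, x ∉ I := fun x hx hxI => hU ⟨x, hx, hxI⟩
    exact ⟨c₁, hc₁, hac₁, hbc₁,
      .of_forall fun s => iff_of_true (H.isClean_of_isIdeal hI hU hc₁ s) hU⟩

theorem isIdeal_liftSet [IsTrans ℕ prec] (H : Stages prec U E V) (hI : IsIdeal prec I) :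
    IsIdeal (Rel E V) (liftSet U I) := by
  refine ⟨?_, ?_, ?_⟩
  · obtain ⟨a, ha⟩ := hI.1
    exact ⟨code false a 0, by simpa [liftSet] using ha⟩
  · rintro n ⟨hn, hn_bodd⟩ m hmn
    exact ⟨hI.2.1 _ hn _ (H.prec_of_transGen hmn.transGen), hn_bodd ∘ hmn.bodd_imp⟩
  · classical
    rintro m ⟨hm, hm_bodd⟩ n ⟨hn, hn_bodd⟩
    obtain ⟨c, hc, hmc, hnc, hclean⟩ := exists_eventually_isClean_iff H hI hm hn
    obtain ⟨u, hmu, hnu, hcu, hm_lt, hn_lt⟩ := ((H.eventually_transGen hmc).and <|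
      (H.eventually_transGen hnc).and <| hclean.and <|
        (eventually_gt_atTop (stage m)).and (eventually_gt_atTop (stage n))).exists
    have hrel : ∀ k, (k.bodd = true → ∀ x ∈ U, x ∉ I) → TransGen (E u) (point k) c →
        stage k < u → Rel E V k (code (decide (∀ x ∈ U, x ∉ I)) c u) := fun k hk hkc hku =>
      ⟨by simpa using hkc, by simpa using hku, by simpa using hcu.symm, by simpa using hk⟩
    exact ⟨_, ⟨by simpa using hc, by simp⟩, hrel m hm_bodd hmu hm_lt,
      hrel n hn_bodd hnu hn_lt⟩

end IdealOfPrec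

section Topology

open TopologicalSpace

variable [IsTrans ℕ prec]

def idealEquiv (H : Stages prec U E V) : IdealSpace (Rel E V) ≃ IdealSpace prec where
  toFun J := ⟨point '' J.1, isIdeal_image H J.2⟩
  invFun I := ⟨liftSet U I.1, isIdeal_liftSet H I.2⟩
  left_inv J := Subtype.ext (liftSet_image H J.2)
  right_inv _ := Subtype.ext image_liftSet

@[simp] theorem coe_idealEquiv (H : Stages prec U E V) (J : IdealSpace (Rel E V)) :
    (idealEquiv H J).1 = point '' J.1 := rfl

@[simp] theorem coe_idealEquiv_symm (H : Stages prec U E V) (I : IdealSpace prec) :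
    ((idealEquiv H).symm I).1 = liftSet U I.1 := rfl

theorem continuous_idealEquiv (H : Stages prec U E V) : Continuous (idealEquiv H) := by
  refine IdealSpace.continuous_iff.2 fun a => ?_
  have : {J | a ∈ (idealEquiv H J).1} =
      ⋃ m ∈ point ⁻¹' {a}, {J : IdealSpace (Rel E V) | m ∈ J.1} := by
    ext J
    simp [and_comm]
  rw [this]
  exact isOpen_biUnion fun m _ => IdealSpace.isOpen_setOf_mem _ m

theorem isOpen_preimage_idealEquiv (H : Stages prec U E V) :
    IsOpen (idealEquiv H ⁻¹' {I | ∀ x ∈ U, x ∉ I.1}) := by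
  have : idealEquiv H ⁻¹' {I | ∀ x ∈ U, x ∉ I.1} =
      ⋃ m ∈ {m | m.bodd = true}, {J : IdealSpace (Rel E V) | m ∈ J.1} := by
    ext J
    simpa [and_comm] using (exists_bodd_iff H J.2).symm
  rw [this]
  exact isOpen_biUnion fun m _ => IdealSpace.isOpen_setOf_mem _ m

theorem continuous_idealEquiv_symm (H : Stages prec U E V) :
    Continuous[withOpen {I | ∀ x ∈ U, x ∉ I.1}, _] (idealEquiv H).symm := by
  refine (@IdealSpace.continuous_iff _ _ _ (withOpen _) _).2 fun m => ?_
  have hbasic : IsOpen[withOpen {I : IdealSpace prec | ∀ x ∈ U, x ∉ I.1}]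
      {I | point m ∈ I.1} := isOpen_withOpen_of_isOpen (IdealSpace.isOpen_setOf_mem _ _)
  by_cases hm : m.bodd = true
  · convert @IsOpen.inter _ (withOpen _) _ _ hbasic isOpen_withOpen_self using 1
    ext I
    simp [liftSet, hm]
  · convert hbasic using 1
    ext I
    simp [liftSet, hm]

def homeomorph (H : Stages prec U E V) :
    @Homeomorph (IdealSpace (Rel E V)) (IdealSpace prec) _
      (withOpen {I | ∀ x ∈ U, x ∉ I.1}) :=
  @Homeomorph.mk _ _ _ (withOpen _) (idealEquiv H)
    (continuous_withOpen_iff.2 ⟨continuous_idealEquiv H, isOpen_preimage_idealEquiv H⟩)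
    (continuous_idealEquiv_symm H)

end Topology

open Primrec in
theorem primrecRel_isClean (hE : PrimrecPred fun x : ℕ × ℕ × ℕ => E x.1 x.2.1 x.2.2)
    (hbound : ∀ s b a, E s b a → a < s) (hV : PrimrecRel V) : PrimrecRel (IsClean E V) := by
  have hR : PrimrecRel fun (y : ℕ) (q : ℕ × ℕ) =>
      ¬V q.1 y ∨ ¬(q.2 = y ∨ TransGen (E q.1) y q.2) :=
    (hV.comp (fst.comp snd) fst).not.or <| ((Primrec.eq.comp (snd.comp snd) fst).or <|
      (hE.transGen hbound).comp <| (fst.comp snd).pair <| fst.pair (snd.comp snd)).not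
  refine (hR.forall_mem_list.comp (list_range.comp fst) .id).of_eq fun q => ?_
  simp only [IsClean, List.mem_range, reflTransGen_iff_eq_or_transGen, imp_iff_not_or, id]

open Primrec in
theorem primrecRel_rel (hE : PrimrecPred fun x : ℕ × ℕ × ℕ => E x.1 x.2.1 x.2.2)
    (hbound : ∀ s b a, E s b a → a < s) (hV : PrimrecRel V) : PrimrecRel (Rel E V) := by
  have hpoint : Primrec point := fst.comp (unpair.comp nat_div2)
  have hstage : Primrec stage := snd.comp (unpair.comp nat_div2)
  have hbodd : PrimrecPred fun m : ℕ => m.bodd = true := Primrec.eq.comp nat_bodd (const true)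
  have hpoints : PrimrecPred fun p : ℕ × ℕ => TransGen (E (stage p.2)) (point p.1) (point p.2) :=
    (hE.transGen hbound).comp <| (hstage.comp snd).pair <| (hpoint.comp fst).pair (hpoint.comp snd)
  have hstages : PrimrecRel fun m n => stage m < stage n :=
    nat_lt.comp (hstage.comp fst) (hstage.comp snd)
  have hclean : PrimrecPred fun p : ℕ × ℕ => IsClean E V (stage p.2) (point p.2) :=
    (primrecRel_isClean hE hbound hV).comp (hstage.comp snd) (hpoint.comp snd)
  refine (hpoints.and <| hstages.and <|
    (((hbodd.comp snd).and hclean).or ((hbodd.comp snd).not.and hclean.not)).and <|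
      (hbodd.comp fst).not.or (hbodd.comp snd)).of_eq fun p => ?_
  rw [← iff_iff_and_or_not_and_not, ← imp_iff_not_or]
  exact ⟨fun ⟨h₁, h₂, h₃, h₄⟩ => ⟨h₁, h₂, h₃, h₄⟩, fun ⟨h₁, h₂, h₃, h₄⟩ => ⟨h₁, h₂, h₃, h₄⟩⟩

theorem rePred'_rel (hE : PrimrecPred fun x : ℕ × ℕ × ℕ => E x.1 x.2.1 x.2.2)
    (hbound : ∀ s b a, E s b a → a < s) (hV : PrimrecRel V) :
    REPred' fun p : ℕ × ℕ => Rel E V p.1 p.2 :=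
  (primrecRel_rel hE hbound hV).computablePred.to_re

open Primrec in
theorem exists_stages (hprec : REPred' fun p : ℕ × ℕ => prec p.1 p.2) (hU : REPred' (· ∈ U)) :
    ∃ E V, Stages prec U E V ∧ PrimrecPred (fun x : ℕ × ℕ × ℕ => E x.1 x.2.1 x.2.2) ∧
      (∀ s b a, E s b a → a < s) ∧ PrimrecRel V := by
  obtain ⟨A, hA, hA_mono, hA_iff⟩ := hprec.exists_primrec_stages
  obtain ⟨B, hB, hB_mono, hB_iff⟩ := hU.exists_primrec_stages
  -- Cutting stage `s` down to targets `a < s` makes it finite, hence its closure decidable.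
  refine ⟨fun s b a => A s (b, a) ∧ a < s, fun s y => B s y,
    ⟨fun hs h => ⟨hA_mono hs h.1, h.2.trans_le hs⟩, fun b a => ?_, hB_mono, hB_iff⟩, ?_,
    fun _ _ _ h => h.2, Primrec.eq.comp hB (const true)⟩
  · refine (hA_iff (b, a)).trans ⟨fun ⟨s, hs⟩ => ?_, fun ⟨s, hs, _⟩ => ⟨s, hs⟩⟩
    exact ⟨max s (a + 1), hA_mono (le_max_left _ _) hs,
      (Nat.lt_succ_self a).trans_le (le_max_right _ _)⟩
  · exact (Primrec.eq.comp (hA.comp fst ((fst.comp snd).pair (snd.comp snd))) (const true)).and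
      (nat_lt.comp (snd.comp snd) fst)

end AdjoinOpen

theorem stmt3 (prec : ℕ → ℕ → Prop)
    (hce : REPred' fun p : ℕ × ℕ => prec p.1 p.2)
    (htrans : Transitive prec)
    (U : Set ℕ) (hU : REPred' (· ∈ U)) :
    ∃ sq : ℕ → ℕ → Prop,
      (REPred' fun p : ℕ × ℕ => sq p.1 p.2) ∧ Transitive sq ∧
      Nonempty (@Homeomorph (IdealSpace sq) (IdealSpace prec) _
        (TopologicalSpace.generateFrom
          ({s : Set (IdealSpace prec) | IsOpen s} ∪
            {{I : IdealSpace prec | ∀ x ∈ U, x ∉ I.1}}))) := by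
  have : IsTrans ℕ prec := ⟨htrans⟩
  obtain ⟨E, V, H, hE, hbound, hV⟩ := AdjoinOpen.exists_stages hce hU
  exact ⟨AdjoinOpen.Rel E V, AdjoinOpen.rePred'_rel hE hbound hV,
    fun _ _ _ => H.isTrans_rel.trans _ _ _, ⟨AdjoinOpen.homeomorph H⟩⟩
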